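/- Let m ≥ 1 be an odd integer and let n ≥ 1 be an integer with m ≤ 2^{n+1} − 3. Then B(2,m,n) ≠ 0 and ν_2(B(2,m,n)) = −ν_2((2m+2)!). -/

import Mathlib

/-! Write `ν = ν₂`. For odd `m` the argument of the `k`-th binomial factor is an odd integer
over `2^e` with `e = n - k + 1 ≥ 1`, so each factor `x - i` of its numerator has valuation `-e`,
and the term of a tuple `j` has valuation `-(Σ e_k j_k + Σ ν(j_k!))`. For the tuple
`(0, …, 0, m + 1)` this is `-(m + 1) - ν((m + 1)!) = -ν((2m + 2)!)`. Any other admissible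
tuple has `j_k ≠ 0` for some `k` with `e_k ≥ 2`, where `e_k < 2^{e_k} - 1`, so
`Σ e_k j_k < Σ (2^{e_k} - 1) j_k = m + 1`, while `Σ ν(j_k!) ≤ ν((Σ j_k)!) ≤ ν((m + 1)!)`.
Hence that single term dominates the sum `2`-adically. -/

/-- Generalized binomial coefficient `C_j(x) = x(x-1)⋯(x-j+1)/j!`, with `C_0(x) = 1`. -/
noncomputable def genBinom (x : ℚ) (j : ℕ) : ℚ :=
  (∏ i ∈ Finset.range j, (x - (i : ℚ))) / (Nat.factorial j : ℚ)

/-- The Ewing–Schober combinatorial formula `B(d,m,n)`: the sum is over all tuples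
`(j_1,…,j_n)` of nonnegative integers (here `j : Fin n → ℕ`, 0-indexed, so `j k`
corresponds to `j_{k+1}`) satisfying `Σ_{k=1}^n (d^{n-k+1} - 1) j_k = m + 1`, of
`Π_{k=1}^n C_{j_k}(m/d^{n-k+1} - Σ_{l=1}^{k-1} d^{k-l} j_l)`, multiplied by `-(1/m)`. -/
noncomputable def multibrotB (d m n : ℕ) : ℚ :=
  -(1 / (m : ℚ)) * ∑ᶠ j : Fin n → ℕ,
    if (∑ k : Fin n, (d ^ (n - k.val) - 1) * j k) = m + 1 then
      ∏ k : Fin n,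
        genBinom ((m : ℚ) / (d : ℚ) ^ (n - k.val)
          - ∑ l ∈ Finset.univ.filter (fun l : Fin n => l < k),
              (d : ℚ) ^ (k.val - l.val) * ((j l : ℕ) : ℚ)) (j k)
    else 0

open Finset
open scoped Nat

lemma ne_zero_of_padicValRat_neg {p : ℕ} {x : ℚ} (hx : padicValRat p x < 0) : x ≠ 0 := by
  rintro rfl
  simp at hx

section PadicValuation

variable {p : ℕ} [Fact p.Prime]

lemma padicValRat_sub_natCast_of_neg {x : ℚ} (hx : padicValRat p x < 0) (N : ℕ) :
    padicValRat p (x - N) = padicValRat p x := by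
  rcases eq_or_ne N 0 with rfl | hN
  · simp
  have hsum : x + -(N : ℚ) ≠ 0 := by
    intro h
    rw [← sub_eq_add_neg, sub_eq_zero] at h
    rw [h, padicValRat.of_nat] at hx
    omega
  have hlt : padicValRat p x < padicValRat p (-(N : ℚ)) := by
    rw [padicValRat.neg, padicValRat.of_nat]
    omega
  rw [sub_eq_add_neg]
  exact padicValRat.add_eq_of_lt hsum (ne_zero_of_padicValRat_neg hx) (by simpa using hN) hlt

lemma padicValRat_natCast_div_pow {m : ℕ} (hm : ¬ p ∣ m) (e : ℕ) :
    padicValRat p (m / p ^ e) = -e := by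
  have hm0 : (m : ℚ) ≠ 0 := Nat.cast_ne_zero.2 fun h => hm (h ▸ dvd_zero p)
  have hp : (p : ℚ) ≠ 0 := Nat.cast_ne_zero.2 (Fact.out : p.Prime).ne_zero
  rw [padicValRat.div hm0 (pow_ne_zero e hp), padicValRat.of_nat,
    padicValNat.eq_zero_of_not_dvd hm, padicValRat.pow,
    padicValRat.self (Fact.out : p.Prime).one_lt]
  simp

lemma padicValRat_prod {ι : Type*} {s : Finset ι} {f : ι → ℚ} (hf : ∀ i ∈ s, f i ≠ 0) :
    padicValRat p (∏ i ∈ s, f i) = ∑ i ∈ s, padicValRat p (f i) := by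
  induction s using Finset.cons_induction with
  | empty => simp
  | cons a t ha ih =>
    rw [prod_cons, sum_cons, padicValRat.mul (hf a (mem_cons_self a t))
      (prod_ne_zero_iff.2 fun i hi => hf i (mem_cons_of_mem hi)),
      ih fun i hi => hf i (mem_cons_of_mem hi)]

lemma lt_padicValRat_sum {ι : Type*} {s : Finset ι} {f : ι → ℚ} {c : ℤ}
    (h : ∀ i ∈ s, f i ≠ 0 → c < padicValRat p (f i)) (hs : ∑ i ∈ s, f i ≠ 0) :
    c < padicValRat p (∑ i ∈ s, f i) := by
  induction s using Finset.cons_induction with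
  | empty => simp at hs
  | cons a t ha ih =>
    rw [sum_cons] at hs ⊢
    have ht := fun i hi => h i (mem_cons_of_mem hi)
    by_cases hfa : f a = 0
    · rw [hfa, zero_add] at hs ⊢
      exact ih ht hs
    by_cases hst : ∑ i ∈ t, f i = 0
    · rw [hst, add_zero]
      exact h a (mem_cons_self a t) hfa
    exact (lt_min (h a (mem_cons_self a t) hfa) (ih ht hst)).trans_le
      (padicValRat.min_le_padicValRat_add hs)

lemma padicValRat_add_of_dominant {q r : ℚ} (hq : q ≠ 0)
    (hr : r ≠ 0 → padicValRat p q < padicValRat p r) :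
    q + r ≠ 0 ∧ padicValRat p (q + r) = padicValRat p q := by
  rcases eq_or_ne r 0 with rfl | hr0
  · simpa using hq
  have hqr : q + r ≠ 0 := by
    intro h
    have := hr hr0
    rw [eq_neg_of_add_eq_zero_right h, padicValRat.neg] at this
    exact this.false
  exact ⟨hqr, padicValRat.add_eq_of_lt hqr hq hr0 (hr hr0)⟩

lemma padicValRat_sum_of_dominant {ι : Type*} {s : Finset ι} {f : ι → ℚ} {i₀ : ι}
    (hi₀ : i₀ ∈ s) (hf : f i₀ ≠ 0)
    (h : ∀ i ∈ s, i ≠ i₀ → f i ≠ 0 → padicValRat p (f i₀) < padicValRat p (f i)) :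
    ∑ i ∈ s, f i ≠ 0 ∧ padicValRat p (∑ i ∈ s, f i) = padicValRat p (f i₀) := by
  classical
  rw [← add_sum_erase s f hi₀]
  exact padicValRat_add_of_dominant hf <| lt_padicValRat_sum fun i hi =>
    h i (mem_of_mem_erase hi) (ne_of_mem_erase hi)

lemma sum_padicValNat_factorial_le {ι : Type*} {s : Finset ι} {f : ι → ℕ} {N : ℕ}
    (h : ∑ i ∈ s, f i ≤ N) :
    ∑ i ∈ s, padicValNat p (f i)! ≤ padicValNat p N ! := by
  have hdvd : ∏ i ∈ s, (f i)! ∣ N ! :=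
    (Nat.prod_factorial_dvd_factorial_sum s f).trans (Nat.factorial_dvd_factorial h)
  have hle := (Nat.factorization_le_iff_dvd
    (prod_ne_zero_iff.2 fun i _ => Nat.factorial_ne_zero _) (Nat.factorial_ne_zero N)).2 hdvd p
  rw [Nat.factorization_prod fun i _ => Nat.factorial_ne_zero _, Finset.sum_apply'] at hle
  simpa only [Nat.factorization_def _ (Fact.out : p.Prime)] using hle

lemma genBinom_ne_zero_of_padicValRat_neg {x : ℚ} (hx : padicValRat p x < 0) (j : ℕ) :
    genBinom x j ≠ 0 :=
  div_ne_zero (prod_ne_zero_iff.2 fun i _ => ne_zero_of_padicValRat_neg (p := p)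
    (by rwa [padicValRat_sub_natCast_of_neg hx])) (by positivity)

lemma padicValRat_genBinom_of_neg {x : ℚ} (hx : padicValRat p x < 0) (j : ℕ) :
    padicValRat p (genBinom x j) = j * padicValRat p x - padicValNat p j ! := by
  have hfac : ∀ i ∈ range j, x - i ≠ 0 := fun i _ =>
    ne_zero_of_padicValRat_neg (p := p) (by rwa [padicValRat_sub_natCast_of_neg hx])
  rw [genBinom, padicValRat.div (prod_ne_zero_iff.2 hfac) (by positivity), padicValRat_prod hfac,
    sum_congr rfl fun i _ => padicValRat_sub_natCast_of_neg hx i, sum_const, card_range,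
    nsmul_eq_mul, padicValRat.of_nat]

end PadicValuation

def multibrotWeight (d n : ℕ) (j : Fin n → ℕ) : ℕ :=
  ∑ k : Fin n, (d ^ (n - k.val) - 1) * j k

def multibrotArg (d m n : ℕ) (j : Fin n → ℕ) (k : Fin n) : ℚ :=
  (m : ℚ) / (d : ℚ) ^ (n - k.val)
    - ∑ l ∈ Finset.univ.filter (fun l : Fin n => l < k),
        (d : ℚ) ^ (k.val - l.val) * ((j l : ℕ) : ℚ)

noncomputable def multibrotTerm (d m n : ℕ) (j : Fin n → ℕ) : ℚ :=
  ∏ k : Fin n, genBinom (multibrotArg d m n j k) (j k)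

noncomputable def multibrotSummand (d m n : ℕ) (j : Fin n → ℕ) : ℚ :=
  if multibrotWeight d n j = m + 1 then multibrotTerm d m n j else 0

lemma multibrotB_eq (d m n : ℕ) :
    multibrotB d m n = -(1 / (m : ℚ)) * ∑ᶠ j, multibrotSummand d m n j :=
  rfl

lemma multibrotWeight_eq_of_multibrotSummand_ne_zero {d m n : ℕ} {j : Fin n → ℕ}
    (h : multibrotSummand d m n j ≠ 0) : multibrotWeight d n j = m + 1 :=
  not_not.1 fun hw => h (if_neg hw)

lemma multibrotSummand_eq_of_ne_zero {d m n : ℕ} {j : Fin n → ℕ}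
    (h : multibrotSummand d m n j ≠ 0) : multibrotSummand d m n j = multibrotTerm d m n j :=
  if_pos (multibrotWeight_eq_of_multibrotSummand_ne_zero h)

def multibrotPoleOrder (p n : ℕ) (j : Fin n → ℕ) : ℕ :=
  ∑ k : Fin n, ((n - k.val) * j k + padicValNat p (j k)!)

section PrimeBase

variable {p m n : ℕ} [Fact p.Prime]

lemma padicValRat_multibrotArg (hm : ¬ p ∣ m) (j : Fin n → ℕ) (k : Fin n) :
    padicValRat p (multibrotArg p m n j k) = -((n - k.val : ℕ) : ℤ) := by
  have hneg : padicValRat p ((m : ℚ) / (p : ℚ) ^ (n - k.val)) < 0 := by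
    rw [padicValRat_natCast_div_pow hm]
    have := k.isLt
    omega
  have := padicValRat_sub_natCast_of_neg hneg
    (∑ l ∈ univ.filter (fun l : Fin n => l < k), p ^ (k.val - l.val) * j l)
  push_cast at this
  rw [multibrotArg, this, padicValRat_natCast_div_pow hm]

lemma padicValRat_multibrotArg_neg (hm : ¬ p ∣ m) (j : Fin n → ℕ) (k : Fin n) :
    padicValRat p (multibrotArg p m n j k) < 0 := by
  rw [padicValRat_multibrotArg hm]
  have := k.isLt
  omega

lemma multibrotTerm_ne_zero (hm : ¬ p ∣ m) (j : Fin n → ℕ) : multibrotTerm p m n j ≠ 0 :=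
  prod_ne_zero_iff.2 fun k _ =>
    genBinom_ne_zero_of_padicValRat_neg (padicValRat_multibrotArg_neg hm j k) (j k)

lemma padicValRat_multibrotTerm (hm : ¬ p ∣ m) (j : Fin n → ℕ) :
    padicValRat p (multibrotTerm p m n j) = -(multibrotPoleOrder p n j : ℤ) := by
  rw [multibrotTerm, padicValRat_prod fun k _ =>
    genBinom_ne_zero_of_padicValRat_neg (padicValRat_multibrotArg_neg hm j k) (j k)]
  simp only [padicValRat_genBinom_of_neg (padicValRat_multibrotArg_neg hm j _),
    padicValRat_multibrotArg hm]
  rw [multibrotPoleOrder]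
  push_cast
  rw [← sum_neg_distrib]
  refine sum_congr rfl fun k _ => ?_
  ring

end PrimeBase

lemma add_one_lt_pow_of_two_le {d e : ℕ} (hd : 2 ≤ d) (he : 2 ≤ e) : e + 1 < d ^ e := by
  obtain ⟨e, rfl⟩ : ∃ e', e = e' + 1 := ⟨e - 1, by omega⟩
  have : e < d ^ e := Nat.lt_pow_self hd
  rw [pow_succ]
  nlinarith

section Weight

variable {d n : ℕ}

lemma one_le_pow_sub_one (hd : 2 ≤ d) (k : Fin n) : 1 ≤ d ^ (n - k.val) - 1 := by
  have : d ≤ d ^ (n - k.val) := Nat.le_self_pow (by have := k.isLt; omega) d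
  omega

lemma sum_le_multibrotWeight (hd : 2 ≤ d) (j : Fin n → ℕ) :
    ∑ k, j k ≤ multibrotWeight d n j :=
  sum_le_sum fun k _ => Nat.le_mul_of_pos_left _ (one_le_pow_sub_one hd k)

lemma mem_piFinset_of_multibrotWeight_eq (hd : 2 ≤ d) {j : Fin n → ℕ} {M : ℕ}
    (hw : multibrotWeight d n j = M) : j ∈ Fintype.piFinset fun _ => range (M + 1) := by
  simp only [Fintype.mem_piFinset, mem_range, Nat.lt_succ_iff]
  exact fun k => (single_le_sum (fun _ _ => Nat.zero_le _) (mem_univ k)).trans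
    (hw ▸ sum_le_multibrotWeight hd j)

lemma support_multibrotSummand_subset (hd : 2 ≤ d) (m : ℕ) :
    Function.support (multibrotSummand d m n)
      ⊆ ↑(Fintype.piFinset fun _ : Fin n => range (m + 2)) :=
  fun _ hj => mem_piFinset_of_multibrotWeight_eq hd
    (multibrotWeight_eq_of_multibrotSummand_ne_zero hj)

lemma sum_mul_lt_multibrotWeight (hd : 2 ≤ d) {j : Fin n → ℕ} {k₀ : Fin n}
    (hk₀ : k₀.val + 2 ≤ n) (hj : j k₀ ≠ 0) :
    ∑ k : Fin n, (n - k.val) * j k < multibrotWeight d n j := by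
  refine sum_lt_sum (fun k _ => Nat.mul_le_mul_right _ ?_) ⟨k₀, mem_univ _, ?_⟩
  · have : n - k.val < d ^ (n - k.val) := Nat.lt_pow_self hd
    omega
  · have := add_one_lt_pow_of_two_le hd (e := n - k₀.val) (by omega)
    exact Nat.mul_lt_mul_of_pos_right (by omega) (Nat.pos_of_ne_zero hj)

end Weight

section LastIndex

variable {p n M : ℕ}

lemma multibrotWeight_two_single_last :
    multibrotWeight 2 (n + 1) (Pi.single (Fin.last n) M) = M := by
  rw [multibrotWeight, Fintype.sum_eq_single (Fin.last n) fun k hk => by simp [hk]]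
  simp

lemma multibrotPoleOrder_single_last :
    multibrotPoleOrder p (n + 1) (Pi.single (Fin.last n) M) = M + padicValNat p M ! := by
  rw [multibrotPoleOrder, Fintype.sum_eq_single (Fin.last n) fun k hk => by simp [hk]]
  simp

lemma exists_ne_last_of_multibrotWeight_two {j : Fin (n + 1) → ℕ}
    (hw : multibrotWeight 2 (n + 1) j = M) (hj : j ≠ Pi.single (Fin.last n) M) :
    ∃ k, k ≠ Fin.last n ∧ j k ≠ 0 := by
  by_contra! h
  refine hj (funext fun k => ?_)
  rcases eq_or_ne k (Fin.last n) with rfl | hk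
  · rw [← hw, multibrotWeight, Fintype.sum_eq_single (Fin.last n) fun k hk => by simp [h k hk]]
    simp
  · simp [h k hk, hk]

lemma multibrotPoleOrder_lt_of_ne_single_last [Fact p.Prime] {j : Fin (n + 1) → ℕ}
    (hw : multibrotWeight 2 (n + 1) j = M) (hj : j ≠ Pi.single (Fin.last n) M) :
    multibrotPoleOrder p (n + 1) j < M + padicValNat p M ! := by
  obtain ⟨k₀, hk₀, hjk₀⟩ := exists_ne_last_of_multibrotWeight_two hw hj
  have hlt := sum_mul_lt_multibrotWeight le_rfl (by have := Fin.val_lt_last hk₀; omega) hjk₀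
  have hle := sum_padicValNat_factorial_le (p := p) (hw ▸ sum_le_multibrotWeight le_rfl j)
  rw [multibrotPoleOrder, sum_add_distrib]
  omega

end LastIndex

lemma finsum_multibrotSummand_two {m n : ℕ} (hm : ¬ 2 ∣ m) :
    ∑ᶠ j, multibrotSummand 2 m (n + 1) j ≠ 0 ∧
      padicValRat 2 (∑ᶠ j, multibrotSummand 2 m (n + 1) j)
        = -((m + 1 + padicValNat 2 (m + 1)! : ℕ) : ℤ) := by
  set j₀ : Fin (n + 1) → ℕ := Pi.single (Fin.last n) (m + 1)
  have hj₀ : multibrotSummand 2 m (n + 1) j₀ = multibrotTerm 2 m (n + 1) j₀ :=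
    if_pos multibrotWeight_two_single_last
  have hdom : ∀ j ∈ Fintype.piFinset (fun _ => range (m + 2)), j ≠ j₀ →
      multibrotSummand 2 m (n + 1) j ≠ 0 →
      padicValRat 2 (multibrotSummand 2 m (n + 1) j₀)
        < padicValRat 2 (multibrotSummand 2 m (n + 1) j) := fun j _ hj hj0 => by
    rw [hj₀, multibrotSummand_eq_of_ne_zero hj0, padicValRat_multibrotTerm hm,
      padicValRat_multibrotTerm hm, multibrotPoleOrder_single_last]
    exact neg_lt_neg <| Nat.cast_lt.2 <| multibrotPoleOrder_lt_of_ne_single_last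
      (multibrotWeight_eq_of_multibrotSummand_ne_zero hj0) hj
  rw [finsum_eq_sum_of_support_subset _ (support_multibrotSummand_subset le_rfl m),
    ← multibrotPoleOrder_single_last, ← padicValRat_multibrotTerm hm, ← hj₀]
  exact padicValRat_sum_of_dominant
    (mem_piFinset_of_multibrotWeight_eq le_rfl multibrotWeight_two_single_last)
    (hj₀ ▸ multibrotTerm_ne_zero hm j₀) hdom

theorem multibrotB_two_odd_general (m n : ℕ) (hodd : Odd m) (hn : 1 ≤ n) :
    multibrotB 2 m n ≠ 0 ∧
      padicValRat 2 (multibrotB 2 m n)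
        = -(padicValNat 2 (Nat.factorial (2 * m + 2)) : ℤ) := by
  obtain ⟨n, rfl⟩ : ∃ n', n = n' + 1 := ⟨n - 1, by omega⟩
  have hm : ¬ 2 ∣ m := Nat.two_dvd_ne_zero.2 (Nat.odd_iff.1 hodd)
  obtain ⟨hne, hval⟩ := finsum_multibrotSummand_two (n := n) hm
  have hcoef : -(1 / (m : ℚ)) ≠ 0 := by simpa using hodd.pos.ne'
  rw [multibrotB_eq]
  refine ⟨mul_ne_zero hcoef hne, ?_⟩
  rw [padicValRat.mul hcoef hne, hval, padicValRat.neg, one_div, padicValRat.inv,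
    padicValRat.of_nat, padicValNat.eq_zero_of_not_dvd hm, show 2 * m + 2 = 2 * (m + 1) by ring,
    padicValNat_factorial_mul]
  push_cast
  ring

theorem multibrotB_two_odd (m n : ℕ) (hm : 1 ≤ m) (hodd : Odd m) (hn : 1 ≤ n)
    (hmn : m ≤ 2 ^ (n + 1) - 3) :
    multibrotB 2 m n ≠ 0 ∧
      padicValRat 2 (multibrotB 2 m n)
        = -(padicValNat 2 (Nat.factorial (2 * m + 2)) : ℤ) :=
  multibrotB_two_odd_general m n hodd hn
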